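/- arXiv:2502.19987 — 4 statements merged into one kernel-verified Lean document; each statement's English description precedes it below -/
import Mathlib

section
/- (Theorem 1, hierarchical structure of Pareto sets.) Suppose the coalition objectives are linear in the agents' values, i.e., F_C(q) = Σ_{a∈C} γ_a F_a(q) for every coalition C ⊆ ι, and that the feasible set Q ⊆ α is the same for all coalition structures. Let CS and CS' be coalition structures over ι such that CS is a refinement of CS' (every coalition of CS' is a union of coalitions of CS). Then the Pareto set of CS' is contained in the Pareto set of CS: every q' ∈ Q that is Pareto optimal for the multi-objective problem with objectives (F_{C'})_{C'∈CS'} over Q is also Pareto optimal for the multi-objective problem with objectives (F_C)_{C∈CS} over Q. -/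
open Finset

/-- Objective of a coalition `C`: the weighted sum of the individual agents'
objective values, `F_C(q) = ∑_{a ∈ C} γ_a F_a(q)`. -/
def coalObj {α ι : Type*} (γ : ι → ℝ) (F : ι → α → ℝ) (C : Finset ι) (q : α) : ℝ :=
  ∑ a ∈ C, γ a * F a q

/-- A coalition structure: a partition of the set of all agents into nonempty
pairwise disjoint coalitions. -/
def IsCoalitionStructure {ι : Type*} [Fintype ι] [DecidableEq ι]
    (CS : Finset (Finset ι)) : Prop :=
  (∀ C ∈ CS, C.Nonempty) ∧
  (∀ C ∈ CS, ∀ D ∈ CS, C ≠ D → Disjoint C D) ∧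
  CS.biUnion id = Finset.univ

/-- `CS` refines `CS'` if every coalition of `CS'` is the union of a
subfamily of coalitions of `CS`. -/
def Refines {ι : Type*} [DecidableEq ι] (CS CS' : Finset (Finset ι)) : Prop :=
  ∀ C' ∈ CS', ∃ S ⊆ CS, C' = S.biUnion id

/-- `qs` dominates `q'` with respect to the coalition structure `CS`:
every coalition objective at `qs` is at least its value at `q'`,
and at least one is strictly greater. -/
def Dominates {α ι : Type*} (γ : ι → ℝ) (F : ι → α → ℝ)
    (CS : Finset (Finset ι)) (qs q' : α) : Prop :=
  (∀ C ∈ CS, coalObj γ F C q' ≤ coalObj γ F C qs) ∧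
  (∃ C ∈ CS, coalObj γ F C q' < coalObj γ F C qs)

/-- The Pareto set of the multi-objective problem with objectives
`(F_C)_{C ∈ CS}` over the feasible set `Q`: the feasible points not
dominated by any feasible point. -/
def ParetoSet {α ι : Type*} (γ : ι → ℝ) (F : ι → α → ℝ)
    (CS : Finset (Finset ι)) (Q : Set α) : Set α :=
  {q ∈ Q | ¬ ∃ qs ∈ Q, Dominates γ F CS qs q}

/-- **Theorem 1, hierarchical structure of Pareto sets.**
With coalition objectives linear in the agents' values and a feasible set `Q`
common to all coalition structures, if the coalition structure `CS` is a
refinement of the coalition structure `CS'`, then the Pareto set of `CS'` is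
contained in the Pareto set of `CS`. -/
theorem paretoSet_subset_of_refines {α ι : Type*} [Fintype ι] [DecidableEq ι]
    (γ : ι → ℝ) (F : ι → α → ℝ) (Q : Set α) (hQ : Q.Nonempty)
    (CS CS' : Finset (Finset ι))
    (hCS : IsCoalitionStructure CS) (hCS' : IsCoalitionStructure CS')
    (href : Refines CS CS') :
    ParetoSet γ F CS' Q ⊆ ParetoSet γ F CS Q := by
  intro q hq
  obtain ⟨hqQ, hnd⟩ := hq
  refine ⟨hqQ, fun ⟨qs, hqsQ, hwk, C, hC, hlt⟩ => hnd ⟨qs, hqsQ, ?_, ?_⟩⟩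
  · -- weak domination for every coarse coalition
    intro C' hC'
    obtain ⟨S, hS, rfl⟩ := href C' hC'
    have hpd : (S : Set (Finset ι)).PairwiseDisjoint id := fun A hA B hB hne =>
      hCS.2.1 A (hS hA) B (hS hB) hne
    rw [show coalObj γ F (S.biUnion id) q = ∑ D ∈ S, coalObj γ F D q from
          Finset.sum_biUnion hpd,
        show coalObj γ F (S.biUnion id) qs = ∑ D ∈ S, coalObj γ F D qs from
          Finset.sum_biUnion hpd]
    exact Finset.sum_le_sum fun D hD => hwk D (hS hD)
  · -- strict domination for the coalition containing C
    obtain ⟨a, ha⟩ := hCS.1 C hC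
    have haU : a ∈ CS'.biUnion id := hCS'.2.2 ▸ Finset.mem_univ a
    obtain ⟨C', hC', haC'⟩ := Finset.mem_biUnion.mp haU
    refine ⟨C', hC', ?_⟩
    obtain ⟨S, hS, hEq⟩ := href C' hC'
    have hpd : (S : Set (Finset ι)).PairwiseDisjoint id := fun A hA B hB hne =>
      hCS.2.1 A (hS hA) B (hS hB) hne
    have haU' : a ∈ S.biUnion id := hEq ▸ haC'
    obtain ⟨D, hD, haD⟩ := Finset.mem_biUnion.mp haU'
    have hCD : C = D := by
      by_contra hne
      exact Finset.notMem_empty a ((hCS.2.1 C hC D (hS hD) hne).le_bot (Finset.mem_inter.mpr ⟨ha, haD⟩))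
    subst hEq
    rw [show coalObj γ F (S.biUnion id) q = ∑ E ∈ S, coalObj γ F E q from
          Finset.sum_biUnion hpd,
        show coalObj γ F (S.biUnion id) qs = ∑ E ∈ S, coalObj γ F E qs from
          Finset.sum_biUnion hpd]
    exact Finset.sum_lt_sum (fun E hE => hwk E (hS hE)) ⟨D, hD, hCD ▸ hlt⟩
end

section
/- Suppose the coalition objectives are linear in the agents' values, i.e., F_C(q) = Σ_{a∈C} γ_a F_a(q) for every coalition C ⊆ ι. Let CS_singleton denote the singleton coalition structure whose coalitions are exactly the one-element sets {a} for a ∈ ι. Then for every coalition structure CS over ι, the Pareto set of CS is contained in the Pareto set of the singleton coalition structure: PS_CS ⊆ PS_{CS_singleton}. In particular, all Pareto sets of all coalition structures can be obtained as subsets of the single Pareto set of the singleton coalition structure. -/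
open Finset

/-- With coalition objectives linear in the agents' values,
the Pareto set of every coalition structure `CS` is contained in the Pareto
set of the singleton coalition structure (whose coalitions are exactly the
one-element sets `{a}` for `a ∈ ι`). -/
theorem paretoSet_subset_paretoSet_singletons {α ι : Type*} [Fintype ι] [DecidableEq ι]
    (γ : ι → ℝ) (F : ι → α → ℝ) (Q : Set α) (hQ : Q.Nonempty)
    (CS : Finset (Finset ι)) (hCS : IsCoalitionStructure CS) :
    ParetoSet γ F CS Q ⊆
      ParetoSet γ F ((Finset.univ : Finset ι).image fun a => ({a} : Finset ι)) Q := by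
  intro q hq
  obtain ⟨hqQ, hnd⟩ := hq
  refine ⟨hqQ, ?_⟩
  rintro ⟨qs, hqsQ, hall, ⟨S, hS, hlt⟩⟩
  obtain ⟨a, -, rfl⟩ := Finset.mem_image.mp hS
  -- per-agent inequalities
  have hpt : ∀ b : ι, γ b * F b q ≤ γ b * F b qs := by
    intro b
    have := hall {b} (Finset.mem_image.mpr ⟨b, Finset.mem_univ b, rfl⟩)
    simpa [coalObj] using this
  have hpta : γ a * F a q < γ a * F a qs := by
    simpa [coalObj] using hlt
  apply hnd
  refine ⟨qs, hqsQ, ?_, ?_⟩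
  · intro C hC
    exact Finset.sum_le_sum fun b _ => hpt b
  · obtain ⟨C, hC, haC⟩ : ∃ C ∈ CS, a ∈ C := by
      have : a ∈ CS.biUnion id := hCS.2.2 ▸ Finset.mem_univ a
      simpa using this
    exact ⟨C, hC, Finset.sum_lt_sum (fun b _ => hpt b) ⟨a, haC, hpta⟩⟩
end

section
/- Suppose the coalition objectives are linear in the agents' values, i.e., F_C(q) = Σ_{a∈C} γ_a F_a(q) for every coalition C ⊆ ι. Fix a coalition structure CS over ι, and suppose for each coalition C ∈ CS the utopia component F_C* is a real number satisfying F_C(q) ≤ F_C* for all q ∈ Q. Then for every q ∈ Q, the unweighted ℓ¹ distance to the utopia point satisfies Σ_{C∈CS} |F_C(q) − F_C*| = Σ_{C∈CS} F_C* − F_ι(q), where F_ι(q) = Σ_{a∈ι} γ_a F_a(q) is the grand-coalition objective. Consequently, a point q* ∈ Q minimizes the unweighted ℓ¹ distance to the utopia point over Q if and only if q* maximizes the grand-coalition objective F_ι over Q. -/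
open Finset

/-- With coalition objectives linear in the agents' values,
fix a coalition structure `CS` and utopia components `Fstar C` with
`F_C(q) ≤ Fstar C` for all `q ∈ Q` and `C ∈ CS`. Then the unweighted ℓ¹
distance to the utopia point satisfies
`∑_{C ∈ CS} |F_C(q) − Fstar C| = ∑_{C ∈ CS} Fstar C − F_ι(q)` on `Q`, and a
feasible point minimizes this distance over `Q` iff it maximizes the
grand-coalition objective `F_ι` over `Q`. -/
theorem l1_utopia_distance_eq {α ι : Type*} [Fintype ι] [DecidableEq ι]
    (γ : ι → ℝ) (F : ι → α → ℝ) (Q : Set α)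
    (CS : Finset (Finset ι)) (hCS : IsCoalitionStructure CS)
    (Fstar : Finset ι → ℝ)
    (hFstar : ∀ q ∈ Q, ∀ C ∈ CS, coalObj γ F C q ≤ Fstar C) :
    (∀ q ∈ Q, ∑ C ∈ CS, |coalObj γ F C q - Fstar C|
      = (∑ C ∈ CS, Fstar C) - coalObj γ F Finset.univ q) ∧
    (∀ qs ∈ Q,
      ((∀ q ∈ Q, ∑ C ∈ CS, |coalObj γ F C qs - Fstar C|
          ≤ ∑ C ∈ CS, |coalObj γ F C q - Fstar C|) ↔
       (∀ q ∈ Q, coalObj γ F Finset.univ q ≤ coalObj γ F Finset.univ qs))) := by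
  obtain ⟨-, hdisj, huniv⟩ := hCS
  have hsum : ∀ q, ∑ C ∈ CS, coalObj γ F C q = coalObj γ F Finset.univ q := by
    intro q
    rw [coalObj, ← huniv, Finset.sum_biUnion]
    · rfl
    · exact fun C hC D hD h => hdisj C hC D hD h
  have key : ∀ q ∈ Q, ∑ C ∈ CS, |coalObj γ F C q - Fstar C|
      = (∑ C ∈ CS, Fstar C) - coalObj γ F Finset.univ q := by
    intro q hq
    rw [← hsum q, ← Finset.sum_sub_distrib]
    exact Finset.sum_congr rfl fun C hC => abs_of_nonpos (by
      linarith [hFstar q hq C hC]) |>.trans (by ring)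
  refine ⟨key, fun qs hqs => ?_⟩
  constructor
  · intro h q hq
    have := h q hq
    rw [key qs hqs, key q hq] at this
    linarith
  · intro h q hq
    rw [key qs hqs, key q hq]
    linarith [h q hq]
end

section
/- Suppose the coalition objectives are linear in the agents' values, i.e., F_C(q) = Σ_{a∈C} γ_a F_a(q) for every coalition C ⊆ ι. Let CS be a refinement of CS' (every coalition of CS' is a union of coalitions of CS), and let q' ∈ Q be Pareto optimal with respect to CS' (i.e., q' ∈ PS_{CS'}). If q* ∈ Q satisfies F_C(q*) ≥ F_C(q') for every C ∈ CS, then F_C(q*) = F_C(q') for every C ∈ CS; that is, no feasible point can weakly improve all coalition objectives of the refined structure CS at a CS'-Pareto-optimal point without being equal in every coalition objective of CS. -/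
open Finset

/-- With coalition objectives linear in the agents' values,
let `CS` refine `CS'` and let `q' ∈ Q` be Pareto optimal with respect to
`CS'`. If `qs ∈ Q` weakly improves every coalition objective of `CS` at `q'`,
then all those objectives are in fact equal. -/
theorem weak_improvement_eq_at_pareto {α ι : Type*} [Fintype ι] [DecidableEq ι]
    (γ : ι → ℝ) (F : ι → α → ℝ) (Q : Set α)
    (CS CS' : Finset (Finset ι))
    (hCS : IsCoalitionStructure CS) (hCS' : IsCoalitionStructure CS')
    (href : Refines CS CS')
    (q' : α) (hq' : q' ∈ ParetoSet γ F CS' Q)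
    (qs : α) (hqs : qs ∈ Q)
    (himp : ∀ C ∈ CS, coalObj γ F C q' ≤ coalObj γ F C qs) :
    ∀ C ∈ CS, coalObj γ F C qs = coalObj γ F C q' := by
  obtain ⟨hne, hdisj, hcover⟩ := hCS
  -- sum decomposition over a subfamily S ⊆ CS
  have hsum : ∀ (S : Finset (Finset ι)), S ⊆ CS → ∀ q,
      coalObj γ F (S.biUnion id) q = ∑ D ∈ S, coalObj γ F D q := by
    intro S hS q
    unfold coalObj
    exact Finset.sum_biUnion (fun D hD E hE hDE =>
      hdisj D (hS hD) E (hS hE) hDE)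
  by_contra h
  push_neg at h
  obtain ⟨C0, hC0, hne0⟩ := h
  have hlt : coalObj γ F C0 q' < coalObj γ F C0 qs :=
    lt_of_le_of_ne (himp C0 hC0) (Ne.symm hne0)
  -- find a ∈ C0, and C' ∈ CS' containing a
  obtain ⟨a, ha⟩ := hne C0 hC0
  obtain ⟨hne', hdisj', hcover'⟩ := hCS'
  have : a ∈ CS'.biUnion id := hcover' ▸ Finset.mem_univ a
  obtain ⟨C', hC', haC'⟩ := Finset.mem_biUnion.mp this
  obtain ⟨S, hS, hCeq⟩ := href C' hC'
  -- a ∈ C' = S.biUnion id, so a ∈ some D ∈ S; by disjointness D = C0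
  have haS : a ∈ S.biUnion id := hCeq ▸ haC'
  obtain ⟨D, hD, haD⟩ := Finset.mem_biUnion.mp haS
  have hDC0 : D = C0 := by
    by_contra hne2
    exact Finset.disjoint_left.mp (hdisj D (hS hD) C0 hC0 hne2) haD ha
  subst hDC0
  -- strict improvement on C'
  have hstrict : coalObj γ F C' q' < coalObj γ F C' qs := by
    rw [hCeq, hsum S hS, hsum S hS]
    exact Finset.sum_lt_sum (fun E hE => himp E (hS hE)) ⟨D, hD, hlt⟩
  -- weak improvement on every C'' ∈ CS'
  have hweak : ∀ C'' ∈ CS', coalObj γ F C'' q' ≤ coalObj γ F C'' qs := by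
    intro C'' hC''
    obtain ⟨S', hS', hCeq'⟩ := href C'' hC''
    rw [hCeq', hsum S' hS', hsum S' hS']
    exact Finset.sum_le_sum (fun E hE => himp E (hS' hE))
  exact hq'.2 ⟨qs, hqs, hweak, C', hC', hstrict⟩
end
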